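/- arXiv:2011.09093 — 2 statements merged into one kernel-verified Lean document; each statement's English description precedes it below -/
import Mathlib

section
/- A matrix A ∈ F_2^{n×n} is not an (r, s)-rigid matrix if and only if there exists a linear subspace X ⊆ F_2^n of dimension at least n − r and a matrix C with at most s non-zero entries in each row such that Ax = Cx for all x ∈ X. -/
/-- A matrix `A ∈ F₂^{n×n}` is `(r, s)`-rigid if it cannot be written as `A = B + C`
where `B` has rank at most `r` and `C` has at most `s` non-zero entries in each row. -/
def IsRigidMatrix {n : ℕ} (A : Matrix (Fin n) (Fin n) (ZMod 2)) (r s : ℕ) : Prop :=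
  ¬ ∃ B C : Matrix (Fin n) (Fin n) (ZMod 2), A = B + C ∧ B.rank ≤ r ∧
      ∀ i, (Finset.univ.filter fun j => C i j ≠ 0).card ≤ s

/-! Writing `A = B + C` with `C` sparse, the rank bound on `B = A - C` is, by rank–nullity,
the statement that `A` and `C` agree on a subspace (the kernel of `B`) of codimension at
most `r`. -/

open Module Matrix

theorem LinearMap.finrank_range_le_iff_exists_le_ker {K V W : Type*} [DivisionRing K]
    [AddCommGroup V] [Module K V] [AddCommGroup W] [Module K W] [FiniteDimensional K V]
    (f : V →ₗ[K] W) (r : ℕ) :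
    finrank K (range f) ≤ r ↔ ∃ X : Submodule K V, finrank K V - r ≤ finrank K X ∧ X ≤ ker f := by
  have rank_nullity := f.finrank_range_add_finrank_ker
  constructor
  · intro hr
    exact ⟨ker f, by omega, le_rfl⟩
  · rintro ⟨X, hX, hXker⟩
    have := Submodule.finrank_mono hXker
    omega

theorem Matrix.rank_le_iff_exists_mulVec_eq_zero {m n K : Type*} [Fintype n] [Field K]
    (B : Matrix m n K) (r : ℕ) :
    B.rank ≤ r ↔ ∃ X : Submodule K (n → K),
      Fintype.card n - r ≤ finrank K X ∧ ∀ x ∈ X, B *ᵥ x = 0 := by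
  rw [Matrix.rank, B.mulVecLin.finrank_range_le_iff_exists_le_ker, finrank_fintype_fun_eq_card]
  rfl

theorem not_isRigidMatrix_iff {n : ℕ} (A : Matrix (Fin n) (Fin n) (ZMod 2)) (r s : ℕ) :
    ¬ IsRigidMatrix A r s ↔ ∃ C : Matrix (Fin n) (Fin n) (ZMod 2),
      (∀ i, (Finset.univ.filter fun j => C i j ≠ 0).card ≤ s) ∧ (A - C).rank ≤ r := by
  rw [IsRigidMatrix, not_not]
  constructor
  · rintro ⟨B, C, rfl, hB, hC⟩
    exact ⟨C, hC, by rwa [add_sub_cancel_right]⟩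
  · rintro ⟨C, hC, hr⟩
    exact ⟨A - C, C, (sub_add_cancel A C).symm, hr, hC⟩

theorem stmt_4 {n : ℕ} (A : Matrix (Fin n) (Fin n) (ZMod 2)) (r s : ℕ) :
    ¬ IsRigidMatrix A r s ↔
      ∃ X : Submodule (ZMod 2) (Fin n → ZMod 2), n - r ≤ Module.finrank (ZMod 2) X ∧
        ∃ C : Matrix (Fin n) (Fin n) (ZMod 2),
          (∀ i, (Finset.univ.filter fun j => C i j ≠ 0).card ≤ s) ∧
          ∀ x ∈ X, A.mulVec x = C.mulVec x := by
  simp only [not_isRigidMatrix_iff, Matrix.rank_le_iff_exists_mulVec_eq_zero, Fintype.card_fin,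
    Matrix.sub_mulVec, sub_eq_zero]
  constructor
  · rintro ⟨C, hC, X, hX, hAC⟩
    exact ⟨X, hX, C, hC, hAC⟩
  · rintro ⟨X, hX, C, hC, hAC⟩
    exact ⟨C, hC, X, hX, hAC⟩
end

section
/- Suppose there is a universal constant c > 0 such that every (r, s)-rigid matrix A ∈ F_2^{n×n}, viewed as a linear function A : F_2^n → F_2^n, is a (cr, cs)-rigid function. Then there is a constant c' > 0 such that every linear function f : F_2^n → F_2^n computable by a depth-2 circuit of width w and degree d is computable by a depth-2 circuit of width c'·w and degree c'·d all of whose gates compute F_2-linear functions. -/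
/-- `(r, s)`-rigidity for a function `F₂ⁿ → F₂ⁿ`. -/
def IsRigidFunc (n : ℕ) (f : (Fin n → ZMod 2) → Fin n → ZMod 2) (r s : ℝ) : Prop :=
  ∀ X : Finset (Fin n → ZMod 2), (2 : ℝ) ^ ((n : ℝ) - r) ≤ X.card →
    ∀ S : Fin n → Finset (Fin n), (∀ i, ((S i).card : ℝ) ≤ s) →
      ∀ g : Fin n → (Fin n → ZMod 2) → ZMod 2,
        (∀ i x y, (∀ j ∈ S i, x j = y j) → g i x = g i y) →
        ∃ x ∈ X, f x ≠ fun i => g i x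

/-- `f` is computable by a depth-2 circuit of width `w` and degree `d` (arbitrary boolean
gates): middle gates `h₁, …, h_w`, and each output gate computes an arbitrary function of
the middle-gate values and of at most `d` directly-wired inputs. -/
def Depth2 (n m w d : ℕ) (f : (Fin n → ZMod 2) → Fin m → ZMod 2) : Prop :=
  ∃ (h : Fin w → (Fin n → ZMod 2) → ZMod 2) (S : Fin m → Finset (Fin n))
    (g : Fin m → (Fin n → ZMod 2) → (Fin w → ZMod 2) → ZMod 2),
    (∀ i, (S i).card ≤ d) ∧
    (∀ i x y hv, (∀ j ∈ S i, x j = y j) → g i x hv = g i y hv) ∧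
    ∀ x i, f x i = g i x fun t => h t x

/-- `f` is computable by a depth-2 circuit of width `w` and degree `d` all of whose gates
compute `F₂`-linear functions: the middle layer computes `H·x`, and output `i` computes a
linear combination of the middle values and of at most `d` directly-wired inputs. -/
def LinDepth2 (n w : ℕ) (d : ℝ) (f : (Fin n → ZMod 2) → Fin n → ZMod 2) : Prop :=
  ∃ (H : Matrix (Fin w) (Fin n) (ZMod 2)) (S : Fin n → Finset (Fin n))
    (C : Matrix (Fin n) (Fin n) (ZMod 2)) (D : Matrix (Fin n) (Fin w) (ZMod 2)),
    (∀ i, ((S i).card : ℝ) ≤ d) ∧ (∀ i j, j ∉ S i → C i j = 0) ∧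
    ∀ x, f x = C.mulVec x + D.mulVec (H.mulVec x)

/-!
If a linear `f = A·x` has a depth-2 circuit of width `w` and degree `d`, fix the values of the
`w` middle gates: on the largest fibre, a set of at least `2^(n-w)` inputs, every output depends
only on its `d` direct inputs. So the function `A` is not `(w, d)`-rigid, hence, by the
hypothesis, the matrix `A` is not `(⌈1/c⌉ w, ⌈1/c⌉ d)`-rigid. A decomposition `A = B + C` with
`B` of low rank and `C` row-sparse is a linear circuit: the middle layer computes `H x` for a rank
factorization `B = D H`, and output `i` adds `(D H x)_i` to the sparse row `(C x)_i`.
-/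

open Matrix Finset

theorem exists_eq_mulVec_of_isLinearMap {R m n : Type*} [CommSemiring R] [Fintype n]
    [DecidableEq n] {f : (n → R) → m → R} (hf : IsLinearMap R f) :
    ∃ A : Matrix m n R, f = A.mulVec :=
  ⟨LinearMap.toMatrix' (hf.mk' f),
    funext fun x => (LinearMap.toMatrix'_mulVec (hf.mk' f) x).symm⟩

theorem Matrix.exists_rank_factorization {K m n : Type*} [Field K] [Fintype m] [Fintype n]
    [DecidableEq n] (B : Matrix m n K) :
    ∃ (D : Matrix m (Fin B.rank) K) (H : Matrix (Fin B.rank) n K), B = D * H := by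
  let b : Module.Basis (Fin B.rank) K (LinearMap.range B.mulVecLin) :=
    Module.finBasisOfFinrankEq K _ rfl
  let P := (LinearMap.range B.mulVecLin).subtype ∘ₗ b.equivFun.symm.toLinearMap
  let Q := b.equivFun.toLinearMap ∘ₗ B.mulVecLin.rangeRestrict
  have hPQ : P ∘ₗ Q = Matrix.toLin' B :=
    LinearMap.ext fun x => by simp [P, Q, Matrix.toLin'_apply']
  refine ⟨LinearMap.toMatrix' P, LinearMap.toMatrix' Q, ?_⟩
  rw [← LinearMap.toMatrix'_comp, hPQ, LinearMap.toMatrix'_toLin']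

theorem exists_two_rpow_sub_le_card_fiber {n w : ℕ}
    (h : (Fin n → ZMod 2) → Fin w → ZMod 2) :
    ∃ p, (2 : ℝ) ^ ((n : ℝ) - w) ≤ #{x | h x = p} := by
  refine Fintype.exists_le_card_fiber_of_nsmul_le_card h (le_of_eq ?_)
  simp only [Fintype.card_fun, Fintype.card_fin, ZMod.card, nsmul_eq_mul]
  push_cast
  rw [← Real.rpow_natCast, ← Real.rpow_natCast, ← Real.rpow_add two_pos]
  ring_nf

theorem IsRigidFunc.mono {n : ℕ} {f : (Fin n → ZMod 2) → Fin n → ZMod 2} {r r' s s' : ℝ}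
    (hf : IsRigidFunc n f r' s') (hr : r ≤ r') (hs : s ≤ s') : IsRigidFunc n f r s :=
  fun X hX S hS g hg =>
    hf X ((Real.rpow_le_rpow_of_exponent_le one_le_two (by linarith)).trans hX) S
      (fun i => (hS i).trans hs) g hg

theorem Depth2.not_isRigidFunc {n w d : ℕ} {f : (Fin n → ZMod 2) → Fin n → ZMod 2}
    (hf : Depth2 n n w d f) : ¬ IsRigidFunc n f w d := by
  intro hrig
  obtain ⟨h, S, g, hS, hg, hfg⟩ := hf
  obtain ⟨p, hp⟩ := exists_two_rpow_sub_le_card_fiber fun x t => h t x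
  obtain ⟨x, hx, hne⟩ := hrig _ hp S (fun i => by exact_mod_cast hS i) (fun i x => g i x p)
    (fun i x y hxy => hg i x y p hxy)
  have hxp : (fun t => h t x) = p := (mem_filter.mp hx).2
  exact hne (funext fun i => hxp ▸ hfg x i)

theorem linDepth2_add_mulVec {n s : ℕ} (B C : Matrix (Fin n) (Fin n) (ZMod 2))
    (hC : ∀ i, #{j | C i j ≠ 0} ≤ s) : LinDepth2 n B.rank s (B + C).mulVec := by
  obtain ⟨D, H, hB⟩ := B.exists_rank_factorization
  refine ⟨H, fun i => {j | C i j ≠ 0}, C, D, fun i => by exact_mod_cast hC i,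
    fun i j hj => by simpa using hj, fun x => ?_⟩
  rw [add_mulVec, mulVec_mulVec, ← hB, add_comm]

theorem stmt_13
    (H : ∃ c : ℝ, 0 < c ∧ ∀ (n r s : ℕ) (A : Matrix (Fin n) (Fin n) (ZMod 2)),
        IsRigidMatrix A r s → IsRigidFunc n A.mulVec (c * r) (c * s)) :
    ∃ c' : ℝ, 0 < c' ∧ ∀ (n w d : ℕ) (f : (Fin n → ZMod 2) → Fin n → ZMod 2),
      IsLinearMap (ZMod 2) f → Depth2 n n w d f →
      ∃ w' : ℕ, (w' : ℝ) ≤ c' * w ∧ LinDepth2 n w' (c' * d) f := by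
  obtain ⟨c, hc, hH⟩ := H
  set k := ⌈c⁻¹⌉₊
  have hck : 1 ≤ c * k :=
    calc 1 = c * c⁻¹ := (mul_inv_cancel₀ hc.ne').symm
      _ ≤ c * k := mul_le_mul_of_nonneg_left (Nat.le_ceil _) hc.le
  have hscale (m : ℕ) : (m : ℝ) ≤ c * ↑(k * m) := by
    push_cast
    nlinarith [m.cast_nonneg (α := ℝ)]
  refine ⟨k, Nat.cast_pos.mpr (Nat.ceil_pos.mpr (inv_pos.mpr hc)), fun n w d f hf hcirc => ?_⟩
  obtain ⟨A, rfl⟩ := exists_eq_mulVec_of_isLinearMap hf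
  have hA : ¬ IsRigidMatrix A (k * w) (k * d) := fun hrig =>
    hcirc.not_isRigidFunc <| (hH n _ _ A hrig).mono (hscale w) (hscale d)
  obtain ⟨B, C, rfl, hB, hC⟩ := not_not.mp hA
  refine ⟨B.rank, by exact_mod_cast hB, ?_⟩
  simpa using linDepth2_add_mulVec B C hC
end
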